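/- Second-order bias identity for the augmented estimating function with fixed, possibly misspecified nuisance functions: for any measurable π̄ : 𝓛 → ℝ with ε ≤ π̄(ℓ) ≤ 1−ε and bounded measurable μ̄(1,·), μ̄(0,·) : 𝓛 → ℝ, letting φ̄ = μ̄(1,L) − μ̄(0,L) + (A/π̄(L))·(Y − μ̄(1,L)) − ((1−A)/(1−π̄(L)))·(Y − μ̄(0,L)), one has E[φ̄] − E[μ(1,L) − μ(0,L)] = E[((π̄(L) − π(L))/π̄(L))·(μ̄(1,L) − μ(1,L))] + E[((π̄(L) − π(L))/(1−π̄(L)))·(μ̄(0,L) − μ(0,L))]. -/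
import Mathlib


open MeasureTheory ProbabilityTheory


lemma sob_abs_mul_le {a b A B : ℝ} (ha : |a| ≤ A) (hb : |b| ≤ B) : |a * b| ≤ A * B := by
  rw [abs_mul]
  exact mul_le_mul ha hb (abs_nonneg _) ((abs_nonneg a).trans ha)

lemma sob_int {Ω : Type*} [MeasurableSpace Ω] (P : Measure Ω) [IsFiniteMeasure P]
    {f : Ω → ℝ} (hf : Measurable f) {c : ℝ} (hb : ∀ᵐ ω ∂P, |f ω| ≤ c) :
    Integrable f P :=
  (integrable_const c).mono' hf.aestronglyMeasurable (by simpa [Real.norm_eq_abs] using hb)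

lemma sob_key {Ω : Type*} [mΩ : MeasurableSpace Ω] (P : Measure Ω) [IsProbabilityMeasure P]
    {𝓛 : Type*} [MeasurableSpace 𝓛]
    {L : Ω → 𝓛} (hL : Measurable L)
    {A : Ω → ℝ} (hA : Measurable A) (hAb : ∀ ω, |A ω| ≤ 1)
    {π : 𝓛 → ℝ}
    (hπver : (fun ω => π (L ω)) =ᵐ[P] P[A | MeasurableSpace.comap L inferInstance])
    (h : 𝓛 → ℝ) (hh : Measurable h) (c : ℝ) (hb : ∀ ℓ, |h ℓ| ≤ c) :
    ∫ ω, A ω * h (L ω) ∂P = ∫ ω, π (L ω) * h (L ω) ∂P := by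
  have hm : MeasurableSpace.comap L inferInstance ≤ mΩ := hL.comap_le
  have hAint : Integrable A P :=
    (integrable_const (1:ℝ)).mono' hA.aestronglyMeasurable
      (by simpa [Real.norm_eq_abs] using ae_of_all _ hAb)
  have hLm : @Measurable Ω 𝓛 (MeasurableSpace.comap L inferInstance) _ L := fun s hs => ⟨s, hs, rfl⟩
  have hsm : StronglyMeasurable[MeasurableSpace.comap L inferInstance] (fun ω => h (L ω)) :=
    (hh.comp hLm).stronglyMeasurable
  have hpull := condExp_stronglyMeasurable_mul_of_bound hm hsm hAint c
    (ae_of_all _ fun ω => by simpa [Real.norm_eq_abs] using hb (L ω))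
  have h1 : ∫ ω, A ω * h (L ω) ∂P = ∫ ω, ((fun ω => h (L ω)) * A) ω ∂P := by
    simp [mul_comm]
  rw [h1, ← integral_condExp hm, integral_congr_ae hpull]
  refine integral_congr_ae ?_
  filter_upwards [hπver] with ω hω
  simp only [Pi.mul_apply, ← hω]
  ring

/-- Second-order bias identity for the augmented estimating function with
fixed, possibly misspecified nuisance functions:
`E[φ̄] − E[μ(1,L) − μ(0,L)]
  = E[((π̄(L) − π(L))/π̄(L))·(μ̄(1,L) − μ(1,L))]
  + E[((π̄(L) − π(L))/(1−π̄(L)))·(μ̄(0,L) − μ(0,L))]`. -/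
theorem second_order_bias_identity
    {Ω : Type*} [MeasurableSpace Ω]
    (P : Measure Ω) [IsProbabilityMeasure P]
    {𝓛 : Type*} [MeasurableSpace 𝓛] [StandardBorelSpace 𝓛]
    (L : Ω → 𝓛) (hL : Measurable L)
    (A : Ω → ℝ) (hA : Measurable A) (hA01 : ∀ ω, A ω = 0 ∨ A ω = 1)
    (Y : Ω → ℝ) (hY : Measurable Y) (C : ℝ) (hYb : ∀ᵐ ω ∂P, |Y ω| ≤ C)
    -- propensity score
    (ε : ℝ) (hε : ε ∈ Set.Ioo (0 : ℝ) (1 / 2))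
    (π : 𝓛 → ℝ) (hπ : Measurable π)
    (hπver : (fun ω => π (L ω)) =ᵐ[P] P[A | MeasurableSpace.comap L inferInstance])
    (hπbd : ∀ᵐ ω ∂P, ε ≤ π (L ω) ∧ π (L ω) ≤ 1 - ε)
    -- outcome regressions
    (μ1 μ0 : 𝓛 → ℝ) (hμ1 : Measurable μ1) (hμ0 : Measurable μ0)
    (Cμ : ℝ) (hμ1b : ∀ ℓ, |μ1 ℓ| ≤ Cμ) (hμ0b : ∀ ℓ, |μ0 ℓ| ≤ Cμ)
    (hreg1 : ∀ g : 𝓛 → ℝ, Measurable g → (∃ Cg, ∀ ℓ, |g ℓ| ≤ Cg) →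
      ∫ ω, A ω * Y ω * g (L ω) ∂P = ∫ ω, A ω * μ1 (L ω) * g (L ω) ∂P)
    (hreg0 : ∀ g : 𝓛 → ℝ, Measurable g → (∃ Cg, ∀ ℓ, |g ℓ| ≤ Cg) →
      ∫ ω, (1 - A ω) * Y ω * g (L ω) ∂P = ∫ ω, (1 - A ω) * μ0 (L ω) * g (L ω) ∂P)
    -- fixed, possibly misspecified nuisances
    (πbar : 𝓛 → ℝ) (hπbar : Measurable πbar)
    (hπbarbd : ∀ ℓ, ε ≤ πbar ℓ ∧ πbar ℓ ≤ 1 - ε)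
    (μbar1 μbar0 : 𝓛 → ℝ) (hμbar1 : Measurable μbar1) (hμbar0 : Measurable μbar0)
    (Cbar : ℝ) (hμbar1b : ∀ ℓ, |μbar1 ℓ| ≤ Cbar) (hμbar0b : ∀ ℓ, |μbar0 ℓ| ≤ Cbar) :
    (∫ ω, (μbar1 (L ω) - μbar0 (L ω)
        + (A ω / πbar (L ω)) * (Y ω - μbar1 (L ω))
        - ((1 - A ω) / (1 - πbar (L ω))) * (Y ω - μbar0 (L ω))) ∂P)
      - ∫ ω, (μ1 (L ω) - μ0 (L ω)) ∂P
    = (∫ ω, ((πbar (L ω) - π (L ω)) / πbar (L ω)) * (μbar1 (L ω) - μ1 (L ω)) ∂P)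
      + ∫ ω, ((πbar (L ω) - π (L ω)) / (1 - πbar (L ω))) * (μbar0 (L ω) - μ0 (L ω)) ∂P := by
  obtain ⟨hε0, hε12⟩ := hε
  -- basic bounds
  have hAb : ∀ ω, |A ω| ≤ 1 := fun ω => by rcases hA01 ω with h | h <;> simp [h]
  have hA1b : ∀ ω, |1 - A ω| ≤ 1 := fun ω => by rcases hA01 ω with h | h <;> simp [h]
  have hπb1 : ∀ᵐ ω ∂P, |π (L ω)| ≤ 1 := by
    filter_upwards [hπbd] with ω ⟨h1, h2⟩
    rw [abs_le]; constructor <;> linarith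
  have hπ1b1 : ∀ᵐ ω ∂P, |1 - π (L ω)| ≤ 1 := by
    filter_upwards [hπbd] with ω ⟨h1, h2⟩
    rw [abs_le]; constructor <;> linarith
  have hπbarpos : ∀ ℓ, 0 < πbar ℓ := fun ℓ => lt_of_lt_of_le hε0 (hπbarbd ℓ).1
  have h1πbarpos : ∀ ℓ, 0 < 1 - πbar ℓ := fun ℓ => by
    have := (hπbarbd ℓ).2; linarith
  have hπbar0 : ∀ ℓ, πbar ℓ ≠ 0 := fun ℓ => (hπbarpos ℓ).ne'
  have h1πbar0 : ∀ ℓ, (1 : ℝ) - πbar ℓ ≠ 0 := fun ℓ => (h1πbarpos ℓ).ne'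
  have hg1b : ∀ ℓ, |(πbar ℓ)⁻¹| ≤ ε⁻¹ := fun ℓ => by
    rw [abs_of_pos (inv_pos.2 (hπbarpos ℓ))]
    exact inv_anti₀ hε0 (hπbarbd ℓ).1
  have hg0b : ∀ ℓ, |(1 - πbar ℓ)⁻¹| ≤ ε⁻¹ := fun ℓ => by
    rw [abs_of_pos (inv_pos.2 (h1πbarpos ℓ))]
    have := (hπbarbd ℓ).2
    exact inv_anti₀ hε0 (by linarith)
  have hYb' : ∀ᵐ ω ∂P, |Y ω| ≤ |C| := hYb.mono fun ω h => h.trans (le_abs_self _)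
  have hμ1b' : ∀ ℓ, |μ1 ℓ| ≤ |Cμ| := fun ℓ => (hμ1b ℓ).trans (le_abs_self _)
  have hμ0b' : ∀ ℓ, |μ0 ℓ| ≤ |Cμ| := fun ℓ => (hμ0b ℓ).trans (le_abs_self _)
  have hμbar1b' : ∀ ℓ, |μbar1 ℓ| ≤ |Cbar| := fun ℓ => (hμbar1b ℓ).trans (le_abs_self _)
  have hμbar0b' : ∀ ℓ, |μbar0 ℓ| ≤ |Cbar| := fun ℓ => (hμbar0b ℓ).trans (le_abs_self _)
  -- measurability shortcuts
  have mπL : Measurable fun ω => π (L ω) := hπ.comp hL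
  have mπbarL : Measurable fun ω => πbar (L ω) := hπbar.comp hL
  have mg1 : Measurable fun ℓ => (πbar ℓ)⁻¹ := hπbar.inv
  have mg0 : Measurable fun ℓ => (1 - πbar ℓ)⁻¹ := (measurable_const.sub hπbar).inv
  -- key conditional-expectation identities
  have key := fun (h : 𝓛 → ℝ) (hh : Measurable h) (c : ℝ) (hb : ∀ ℓ, |h ℓ| ≤ c) =>
    sob_key P hL hA hAb hπver h hh c hb
  have key0 : ∀ (h : 𝓛 → ℝ), Measurable h → ∀ c : ℝ, (∀ ℓ, |h ℓ| ≤ c) →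
      ∫ ω, (1 - A ω) * h (L ω) ∂P = ∫ ω, (1 - π (L ω)) * h (L ω) ∂P := by
    intro h hh c hb
    have ih : Integrable (fun ω => h (L ω)) P :=
      sob_int P (hh.comp hL) (ae_of_all _ fun ω => hb (L ω))
    have ihA : Integrable (fun ω => A ω * h (L ω)) P :=
      sob_int P (hA.mul (hh.comp hL))
        (ae_of_all _ fun ω => sob_abs_mul_le (hAb ω) (hb (L ω)))
    have ihπ : Integrable (fun ω => π (L ω) * h (L ω)) P :=
      sob_int P (mπL.mul (hh.comp hL))
        (hπb1.mono fun ω hω => sob_abs_mul_le hω (hb (L ω)))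
    simp_rw [sub_mul, one_mul]
    rw [integral_sub ih ihA, integral_sub ih ihπ, key h hh c hb]
  -- regression substitutions
  have hE1 := hreg1 (fun ℓ => (πbar ℓ)⁻¹) mg1 ⟨ε⁻¹, hg1b⟩
  have hE0 := hreg0 (fun ℓ => (1 - πbar ℓ)⁻¹) mg0 ⟨ε⁻¹, hg0b⟩
  have hK1 := key (fun ℓ => μ1 ℓ * (πbar ℓ)⁻¹) (hμ1.mul mg1) (|Cμ| * ε⁻¹)
    (fun ℓ => sob_abs_mul_le (hμ1b' ℓ) (hg1b ℓ))
  have hK1' := key (fun ℓ => μbar1 ℓ * (πbar ℓ)⁻¹) (hμbar1.mul mg1) (|Cbar| * ε⁻¹)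
    (fun ℓ => sob_abs_mul_le (hμbar1b' ℓ) (hg1b ℓ))
  have hK0 := key0 (fun ℓ => μ0 ℓ * (1 - πbar ℓ)⁻¹) (hμ0.mul mg0) (|Cμ| * ε⁻¹)
    (fun ℓ => sob_abs_mul_le (hμ0b' ℓ) (hg0b ℓ))
  have hK0' := key0 (fun ℓ => μbar0 ℓ * (1 - πbar ℓ)⁻¹) (hμbar0.mul mg0) (|Cbar| * ε⁻¹)
    (fun ℓ => sob_abs_mul_le (hμbar0b' ℓ) (hg0b ℓ))
  -- integrable pieces
  have iS1 : Integrable (fun ω => μbar1 (L ω) - μbar0 (L ω)) P :=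
    sob_int P ((hμbar1.comp hL).sub (hμbar0.comp hL))
      (ae_of_all _ fun ω => (abs_sub _ _).trans (add_le_add (hμbar1b' _) (hμbar0b' _)))
  have iT1 : Integrable (fun ω => A ω * Y ω * (πbar (L ω))⁻¹) P :=
    sob_int P ((hA.mul hY).mul (mg1.comp hL))
      (hYb'.mono fun ω hω => sob_abs_mul_le (sob_abs_mul_le (hAb ω) hω) (hg1b (L ω)))
  have iT2 : Integrable (fun ω => A ω * (μbar1 (L ω) * (πbar (L ω))⁻¹)) P :=
    sob_int P (hA.mul ((hμbar1.comp hL).mul (mg1.comp hL)))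
      (ae_of_all _ fun ω =>
        sob_abs_mul_le (hAb ω) (sob_abs_mul_le (hμbar1b' _) (hg1b (L ω))))
  have iT3 : Integrable (fun ω => (1 - A ω) * Y ω * (1 - πbar (L ω))⁻¹) P :=
    sob_int P (((measurable_const.sub hA).mul hY).mul (mg0.comp hL))
      (hYb'.mono fun ω hω => sob_abs_mul_le (sob_abs_mul_le (hA1b ω) hω) (hg0b (L ω)))
  have iT4 : Integrable (fun ω => (1 - A ω) * (μbar0 (L ω) * (1 - πbar (L ω))⁻¹)) P :=
    sob_int P ((measurable_const.sub hA).mul ((hμbar0.comp hL).mul (mg0.comp hL)))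
      (ae_of_all _ fun ω =>
        sob_abs_mul_le (hA1b ω) (sob_abs_mul_le (hμbar0b' _) (hg0b (L ω))))
  have iU1 : Integrable (fun ω => π (L ω) * (μ1 (L ω) * (πbar (L ω))⁻¹)) P :=
    sob_int P (mπL.mul ((hμ1.comp hL).mul (mg1.comp hL)))
      (hπb1.mono fun ω hω => sob_abs_mul_le hω (sob_abs_mul_le (hμ1b' _) (hg1b (L ω))))
  have iU2 : Integrable (fun ω => π (L ω) * (μbar1 (L ω) * (πbar (L ω))⁻¹)) P :=
    sob_int P (mπL.mul ((hμbar1.comp hL).mul (mg1.comp hL)))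
      (hπb1.mono fun ω hω => sob_abs_mul_le hω (sob_abs_mul_le (hμbar1b' _) (hg1b (L ω))))
  have iU3 : Integrable (fun ω => (1 - π (L ω)) * (μ0 (L ω) * (1 - πbar (L ω))⁻¹)) P :=
    sob_int P ((measurable_const.sub mπL).mul ((hμ0.comp hL).mul (mg0.comp hL)))
      (hπ1b1.mono fun ω hω => sob_abs_mul_le hω (sob_abs_mul_le (hμ0b' _) (hg0b (L ω))))
  have iU4 : Integrable (fun ω => (1 - π (L ω)) * (μbar0 (L ω) * (1 - πbar (L ω))⁻¹)) P :=
    sob_int P ((measurable_const.sub mπL).mul ((hμbar0.comp hL).mul (mg0.comp hL)))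
      (hπ1b1.mono fun ω hω => sob_abs_mul_le hω (sob_abs_mul_le (hμbar0b' _) (hg0b (L ω))))
  have iD : Integrable (fun ω => μ1 (L ω) - μ0 (L ω)) P :=
    sob_int P ((hμ1.comp hL).sub (hμ0.comp hL))
      (ae_of_all _ fun ω => (abs_sub _ _).trans (add_le_add (hμ1b' _) (hμ0b' _)))
  have iR1 : Integrable
      (fun ω => (πbar (L ω) - π (L ω)) / πbar (L ω) * (μbar1 (L ω) - μ1 (L ω))) P :=
    sob_int P (((mπbarL.sub mπL).div (mπbarL)).mul ((hμbar1.comp hL).sub (hμ1.comp hL)))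
      (by
        filter_upwards [hπb1] with ω hω
        have h2 : |πbar (L ω)| ≤ 1 := by
          have h3 := (hπbarbd (L ω)).1
          have h4 := (hπbarbd (L ω)).2
          rw [abs_le]; exact ⟨by linarith, by linarith⟩
        have h1 : |πbar (L ω) - π (L ω)| ≤ 2 := (abs_sub _ _).trans (by linarith)
        have hfin := sob_abs_mul_le (sob_abs_mul_le h1 (hg1b (L ω)))
          ((abs_sub _ _).trans (add_le_add (hμbar1b' (L ω)) (hμ1b' (L ω))))
        simpa [div_eq_mul_inv] using hfin)
  have iR2 : Integrable
      (fun ω => (πbar (L ω) - π (L ω)) / (1 - πbar (L ω)) * (μbar0 (L ω) - μ0 (L ω))) P :=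
    sob_int P (((mπbarL.sub mπL).div (measurable_const.sub mπbarL)).mul
        ((hμbar0.comp hL).sub (hμ0.comp hL)))
      (by
        filter_upwards [hπb1] with ω hω
        have h2 : |πbar (L ω)| ≤ 1 := by
          have h3 := (hπbarbd (L ω)).1
          have h4 := (hπbarbd (L ω)).2
          rw [abs_le]; exact ⟨by linarith, by linarith⟩
        have h1 : |πbar (L ω) - π (L ω)| ≤ 2 := (abs_sub _ _).trans (by linarith)
        have hfin := sob_abs_mul_le (sob_abs_mul_le h1 (hg0b (L ω)))
          ((abs_sub _ _).trans (add_le_add (hμbar0b' (L ω)) (hμ0b' (L ω))))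
        simpa [div_eq_mul_inv] using hfin)
  -- split the big integral
  have hsplit : (∫ ω, (μbar1 (L ω) - μbar0 (L ω)
        + (A ω / πbar (L ω)) * (Y ω - μbar1 (L ω))
        - ((1 - A ω) / (1 - πbar (L ω))) * (Y ω - μbar0 (L ω))) ∂P)
      = (∫ ω, (μbar1 (L ω) - μbar0 (L ω)) ∂P)
        + ((∫ ω, A ω * Y ω * (πbar (L ω))⁻¹ ∂P)
          - ∫ ω, A ω * (μbar1 (L ω) * (πbar (L ω))⁻¹) ∂P)
        - ((∫ ω, (1 - A ω) * Y ω * (1 - πbar (L ω))⁻¹ ∂P)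
          - ∫ ω, (1 - A ω) * (μbar0 (L ω) * (1 - πbar (L ω))⁻¹) ∂P) := by
    have iT12 : Integrable (fun ω => A ω * Y ω * (πbar (L ω))⁻¹
        - A ω * (μbar1 (L ω) * (πbar (L ω))⁻¹)) P := iT1.sub iT2
    have iT34 : Integrable (fun ω => (1 - A ω) * Y ω * (1 - πbar (L ω))⁻¹
        - (1 - A ω) * (μbar0 (L ω) * (1 - πbar (L ω))⁻¹)) P := iT3.sub iT4
    have iS112 : Integrable (fun ω => (μbar1 (L ω) - μbar0 (L ω))
        + (A ω * Y ω * (πbar (L ω))⁻¹ - A ω * (μbar1 (L ω) * (πbar (L ω))⁻¹))) P := iS1.add iT12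
    rw [← integral_sub iT1 iT2, ← integral_sub iT3 iT4,
        ← integral_add iS1 iT12, ← integral_sub iS112 iT34]
    refine integral_congr_ae (ae_of_all _ fun ω => ?_)
    simp only [div_eq_mul_inv]
    ring
  -- rewrite each stochastic term
  have hT1 : (∫ ω, A ω * Y ω * (πbar (L ω))⁻¹ ∂P)
      = ∫ ω, π (L ω) * (μ1 (L ω) * (πbar (L ω))⁻¹) ∂P := by
    rw [hE1, ← hK1]
    simp_rw [mul_assoc]
  have hT2 : (∫ ω, A ω * (μbar1 (L ω) * (πbar (L ω))⁻¹) ∂P)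
      = ∫ ω, π (L ω) * (μbar1 (L ω) * (πbar (L ω))⁻¹) ∂P := hK1'
  have hT3 : (∫ ω, (1 - A ω) * Y ω * (1 - πbar (L ω))⁻¹ ∂P)
      = ∫ ω, (1 - π (L ω)) * (μ0 (L ω) * (1 - πbar (L ω))⁻¹) ∂P := by
    rw [hE0, ← hK0]
    simp_rw [mul_assoc]
  have hT4 : (∫ ω, (1 - A ω) * (μbar0 (L ω) * (1 - πbar (L ω))⁻¹) ∂P)
      = ∫ ω, (1 - π (L ω)) * (μbar0 (L ω) * (1 - πbar (L ω))⁻¹) ∂P := hK0'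
  rw [hsplit, hT1, hT2, hT3, hT4]
  -- recombine everything into a single integral on each side
  have iU12 : Integrable (fun ω => π (L ω) * (μ1 (L ω) * (πbar (L ω))⁻¹)
      - π (L ω) * (μbar1 (L ω) * (πbar (L ω))⁻¹)) P := iU1.sub iU2
  have iU34 : Integrable (fun ω => (1 - π (L ω)) * (μ0 (L ω) * (1 - πbar (L ω))⁻¹)
      - (1 - π (L ω)) * (μbar0 (L ω) * (1 - πbar (L ω))⁻¹)) P := iU3.sub iU4
  have iS112 : Integrable (fun ω => (μbar1 (L ω) - μbar0 (L ω))
      + (π (L ω) * (μ1 (L ω) * (πbar (L ω))⁻¹)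
        - π (L ω) * (μbar1 (L ω) * (πbar (L ω))⁻¹))) P := iS1.add iU12
  have iBig : Integrable (fun ω => (μbar1 (L ω) - μbar0 (L ω))
      + (π (L ω) * (μ1 (L ω) * (πbar (L ω))⁻¹)
        - π (L ω) * (μbar1 (L ω) * (πbar (L ω))⁻¹))
      - ((1 - π (L ω)) * (μ0 (L ω) * (1 - πbar (L ω))⁻¹)
        - (1 - π (L ω)) * (μbar0 (L ω) * (1 - πbar (L ω))⁻¹))) P := iS112.sub iU34
  rw [← integral_sub iU1 iU2, ← integral_sub iU3 iU4,
      ← integral_add iS1 iU12, ← integral_sub iS112 iU34,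
      ← integral_sub iBig iD,
      ← integral_add iR1 iR2]
  refine integral_congr_ae (ae_of_all _ fun ω => ?_)
  have h0 := hπbar0 (L ω)
  have h1 := h1πbar0 (L ω)
  field_simp
  ring
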